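/- arXiv:math/0009253 — 7 statements merged into one kernel-verified Lean document; each statement's English description precedes it below -/
import Mathlib

section
/- For nonnegative integers x_1,...,x_k and any integer δ ≥ 2, one has W_1·W_{δ-1} − W_δ ≥ W_1·W_{δ-2} − W_{δ-1}, where W_j = W_j^{(k)}(x_1,...,x_k) denotes the complete homogeneous symmetric polynomial of degree j in k variables evaluated at (x_1,...,x_k). -/
/-- The Wronski (complete homogeneous symmetric) function
`W k δ x = ∑_{i₁+⋯+i_k = δ} x₁^{i₁} ⋯ x_k^{i_k}`. -/
def W {R : Type*} [CommSemiring R] (k δ : ℕ) (x : Fin k → R) : R :=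
  ∑ c ∈ Finset.filter (fun c => ∑ i, c i = δ)
      (Fintype.piFinset fun _ : Fin k => Finset.range (δ + 1)),
    ∏ i, x i ^ c i

namespace WronskiAux

variable {k : ℕ}

/-- support of a composition -/
def supp (c : Fin k → ℕ) : Finset (Fin k) := Finset.univ.filter (fun i => c i ≠ 0)

lemma mem_supp {c : Fin k → ℕ} {i : Fin k} : i ∈ supp c ↔ c i ≠ 0 := by
  simp [supp]

lemma W_eq {R : Type*} [CommSemiring R] (k n : ℕ) (x : Fin k → R) :
    W k n x = ∑ c ∈ Finset.Nat.antidiagonalTuple k n, ∏ i, x i ^ c i := by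
  unfold W
  refine Finset.sum_congr ?_ (fun _ _ => rfl)
  ext c
  simp only [Finset.mem_filter, Fintype.mem_piFinset, Finset.mem_range,
    Finset.Nat.mem_antidiagonalTuple]
  constructor
  · exact fun h => h.2
  · intro h
    refine ⟨fun i => ?_, h⟩
    have := Finset.single_le_sum (f := c) (fun i _ => Nat.zero_le _) (Finset.mem_univ i)
    omega

lemma prod_pow_single {R : Type*} [CommSemiring R] (x : Fin k → R) (j : Fin k) :
    ∏ i, x i ^ (Pi.single j 1 : Fin k → ℕ) i = x j := by
  rw [Finset.prod_eq_single j]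
  · simp
  · intro i _ hij
    simp [Pi.single_apply, hij]
  · exact fun h => absurd (Finset.mem_univ j) h

lemma W_one (x : Fin k → ℤ) : W k 1 x = ∑ i, x i := by
  rw [W_eq]
  have himg : Finset.Nat.antidiagonalTuple k 1
      = Finset.univ.image (fun j : Fin k => (Pi.single j 1 : Fin k → ℕ)) := by
    ext c
    simp only [Finset.Nat.mem_antidiagonalTuple, Finset.mem_image, Finset.mem_univ, true_and]
    constructor
    · intro h
      have hex : ∃ j, c j ≠ 0 := by
        by_contra hc
        push_neg at hc
        simp [hc] at h
      obtain ⟨j, hj⟩ := hex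
      refine ⟨j, ?_⟩
      funext i
      rcases eq_or_ne i j with rfl | hij
      · have h1 : c i ≤ 1 :=
          h ▸ Finset.single_le_sum (f := c) (fun i _ => Nat.zero_le _) (Finset.mem_univ i)
        simp only [Pi.single_eq_same]
        omega
      · have hpair : c i + c j ≤ 1 := by
          have hs := Finset.sum_le_sum_of_subset (f := c)
            (Finset.subset_univ ({i, j} : Finset (Fin k)))
          rw [Finset.sum_pair hij] at hs
          omega
        simp only [Pi.single_apply, if_neg hij]
        omega
    · rintro ⟨j, rfl⟩
      simp [Finset.sum_pi_single']
  rw [himg, Finset.sum_image]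
  · exact Finset.sum_congr rfl (fun j _ => prod_pow_single x j)
  · intro a _ b _ hab
    have h2 := congrFun hab a
    simp only [Pi.single_eq_same, Pi.single_apply] at h2
    by_contra hne
    rw [if_neg hne] at h2
    exact Nat.one_ne_zero h2

lemma sum_single (j : Fin k) : ∑ i, (Pi.single j 1 : Fin k → ℕ) i = 1 := by
  simp [Finset.sum_pi_single']

lemma sub_add_single {c : Fin k → ℕ} {j : Fin k} (h : c j ≠ 0) :
    (c - (Pi.single j 1 : Fin k → ℕ)) + (Pi.single j 1 : Fin k → ℕ) = c := by
  funext i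
  rcases eq_or_ne i j with rfl | hij
  · simp only [Pi.add_apply, Pi.sub_apply, Pi.single_eq_same]
    omega
  · simp [Pi.single_apply, hij]

lemma prod_pow_add {x : Fin k → ℤ} (c : Fin k → ℕ) (j : Fin k) :
    ∏ i, x i ^ (c + (Pi.single j 1 : Fin k → ℕ)) i = x j * ∏ i, x i ^ c i := by
  simp_rw [Pi.add_apply, pow_add, Finset.prod_mul_distrib]
  rw [prod_pow_single, mul_comm]

lemma W_one_mul (x : Fin k → ℤ) (d : ℕ) :
    W k 1 x * W k d x
      = ∑ c ∈ Finset.Nat.antidiagonalTuple k (d + 1),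
          ((supp c).card : ℤ) * ∏ i, x i ^ c i := by
  rw [W_one, W_eq, Finset.sum_mul_sum]
  have lhs : ∑ j : Fin k, ∑ c ∈ Finset.Nat.antidiagonalTuple k d, x j * ∏ i, x i ^ c i
      = ∑ p ∈ Finset.univ ×ˢ Finset.Nat.antidiagonalTuple k d,
          ∏ i, x i ^ (p.2 + (Pi.single p.1 1 : Fin k → ℕ)) i := by
    rw [Finset.sum_product]
    exact Finset.sum_congr rfl fun j _ => Finset.sum_congr rfl fun c _ =>
      (prod_pow_add c j).symm
  rw [lhs]
  have rhs : ∑ c ∈ Finset.Nat.antidiagonalTuple k (d + 1),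
        ((supp c).card : ℤ) * ∏ i, x i ^ c i
      = ∑ q ∈ (Finset.Nat.antidiagonalTuple k (d + 1) ×ˢ Finset.univ).filter
          (fun q : (Fin k → ℕ) × Fin k => q.2 ∈ supp q.1),
          ∏ i, x i ^ q.1 i := by
    rw [Finset.sum_finset_product _ (Finset.Nat.antidiagonalTuple k (d + 1)) (fun c => supp c)
      (by intro p; simp only [Finset.mem_filter, Finset.mem_product, Finset.mem_univ,
            and_true])]
    refine Finset.sum_congr rfl fun c _ => ?_
    dsimp only
    rw [Finset.sum_const, nsmul_eq_mul]
  rw [rhs]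
  refine Finset.sum_nbij' (fun p : Fin k × (Fin k → ℕ) => (p.2 + (Pi.single p.1 1 : Fin k → ℕ), p.1))
    (fun q : (Fin k → ℕ) × Fin k => (q.2, q.1 - (Pi.single q.2 1 : Fin k → ℕ))) ?_ ?_ ?_ ?_ ?_
  · rintro ⟨j, c⟩ hp
    simp only [Finset.mem_product, Finset.mem_univ, true_and,
      Finset.Nat.mem_antidiagonalTuple] at hp
    simp only [Finset.mem_filter, Finset.mem_product, Finset.mem_univ, and_true,
      Finset.Nat.mem_antidiagonalTuple, mem_supp]
    refine ⟨by simp [Finset.sum_add_distrib, hp, sum_single], by simp⟩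
  · rintro ⟨c, j⟩ hq
    simp only [Finset.mem_filter, Finset.mem_product, Finset.mem_univ, and_true,
      Finset.Nat.mem_antidiagonalTuple, mem_supp] at hq
    simp only [Finset.mem_product, Finset.mem_univ, true_and,
      Finset.Nat.mem_antidiagonalTuple]
    have key := sub_add_single hq.2
    have hsum : ∑ i, ((c - (Pi.single j 1 : Fin k → ℕ))
        + (Pi.single j 1 : Fin k → ℕ)) i = d + 1 := by
      rw [key]; exact hq.1
    simp only [Pi.add_apply] at hsum
    rw [Finset.sum_add_distrib, sum_single] at hsum
    exact Nat.add_right_cancel hsum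
  · rintro ⟨j, c⟩ _
    simp only [Prod.mk.injEq]
    refine ⟨trivial, ?_⟩
    funext i
    simp only [Pi.sub_apply, Pi.add_apply]
    simp
  · rintro ⟨c, j⟩ hq
    simp only [Finset.mem_filter, Finset.mem_product, Finset.mem_univ, and_true,
      Finset.Nat.mem_antidiagonalTuple, mem_supp] at hq
    simp only [Prod.mk.injEq]
    exact ⟨sub_add_single hq.2, trivial⟩
  · rintro ⟨j, c⟩ _
    rfl

lemma supp_nonempty {c : Fin k → ℕ} {n : ℕ} (hn : 1 ≤ n) (h : ∑ i, c i = n) :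
    (supp c).Nonempty := by
  by_contra hne
  rw [Finset.not_nonempty_iff_eq_empty] at hne
  have hz : ∀ i, c i = 0 := by
    intro i
    by_contra hi
    have : i ∈ supp c := mem_supp.mpr hi
    simp [hne] at this
  simp [hz] at h
  omega

lemma prod_nonneg' {x : Fin k → ℤ} (hx : ∀ i, 0 ≤ x i) (c : Fin k → ℕ) :
    0 ≤ ∏ i, x i ^ c i :=
  Finset.prod_nonneg fun i _ => pow_nonneg (hx i) _

/-- the step map -/
noncomputable def φ (c : Fin k → ℕ) : Fin k → ℕ :=
  if h : (supp c).Nonempty then c + (Pi.single ((supp c).min' h) 1 : Fin k → ℕ) else c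

lemma φ_spec {c : Fin k → ℕ} (h : (supp c).Nonempty) :
    φ c = c + (Pi.single ((supp c).min' h) 1 : Fin k → ℕ) := dif_pos h

lemma supp_φ {c : Fin k → ℕ} (h : (supp c).Nonempty) : supp (φ c) = supp c := by
  rw [φ_spec h]
  ext i
  have hj : c ((supp c).min' h) ≠ 0 := mem_supp.mp (Finset.min'_mem _ h)
  simp only [mem_supp, Pi.add_apply, Pi.single_apply]
  rcases eq_or_ne i ((supp c).min' h) with heq | hij
  · rw [if_pos heq, heq]
    constructor
    · intro _; exact hj
    · intro _; omega
  · rw [if_neg hij]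
    omega

lemma sum_φ {c : Fin k → ℕ} (h : (supp c).Nonempty) :
    ∑ i, φ c i = (∑ i, c i) + 1 := by
  rw [φ_spec h]
  simp [Finset.sum_add_distrib, sum_single]

lemma key_ineq (x : Fin k → ℤ) (hx : ∀ i, 0 ≤ x i) (n : ℕ) (hn : 1 ≤ n) :
    ∑ c ∈ Finset.Nat.antidiagonalTuple k n,
        (((supp c).card : ℤ) - 1) * ∏ i, x i ^ c i
      ≤ ∑ c ∈ Finset.Nat.antidiagonalTuple k (n + 1),
        (((supp c).card : ℤ) - 1) * ∏ i, x i ^ c i := by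
  set A := Finset.Nat.antidiagonalTuple k n with hA
  set t : (Fin k → ℕ) → ℤ := fun c => (((supp c).card : ℤ) - 1) * ∏ i, x i ^ c i with ht
  have hne : ∀ c ∈ A, (supp c).Nonempty := fun c hc =>
    supp_nonempty hn (Finset.Nat.mem_antidiagonalTuple.mp hc)
  have hinj : ∀ a ∈ A, ∀ b ∈ A, φ a = φ b → a = b := by
    intro a ha b hb hab
    have hsa := supp_φ (hne a ha)
    have hsb := supp_φ (hne b hb)
    have hsupp : supp a = supp b := by rw [← hsa, ← hsb, hab]
    have hmin : (supp a).min' (hne a ha) = (supp b).min' (hne b hb) := by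
      congr 1
    rw [φ_spec (hne a ha), φ_spec (hne b hb)] at hab
    funext i
    have hfi := congrFun hab i
    simp only [Pi.add_apply] at hfi
    rw [hmin] at hfi
    omega
  have himage : Finset.image φ A ⊆ Finset.Nat.antidiagonalTuple k (n + 1) := by
    intro c' hc'
    obtain ⟨c, hc, rfl⟩ := Finset.mem_image.mp hc'
    rw [Finset.Nat.mem_antidiagonalTuple, sum_φ (hne c hc),
      Finset.Nat.mem_antidiagonalTuple.mp hc]
  have hnonneg : ∀ c ∈ Finset.Nat.antidiagonalTuple k (n + 1),
      c ∉ Finset.image φ A → 0 ≤ t c := by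
    intro c hc _
    have hs : (supp c).Nonempty :=
      supp_nonempty (by omega) (Finset.Nat.mem_antidiagonalTuple.mp hc)
    have hcard : 1 ≤ (supp c).card := Finset.Nonempty.card_pos hs
    apply mul_nonneg
    · have : (1 : ℤ) ≤ ((supp c).card : ℤ) := by exact_mod_cast hcard
      omega
    · exact prod_nonneg' hx c
  calc ∑ c ∈ A, t c ≤ ∑ c ∈ A, t (φ c) := by
        apply Finset.sum_le_sum
        intro c hc
        have h := hne c hc
        set j := (supp c).min' h with hj
        have hjs : c j ≠ 0 := mem_supp.mp (Finset.min'_mem _ h)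
        rw [ht]
        simp only
        rw [supp_φ h, φ_spec h, ← hj, prod_pow_add]
        rcases eq_or_lt_of_le (hx j) with hxj | hxj
        · have hz : ∏ i, x i ^ c i = 0 :=
            Finset.prod_eq_zero (Finset.mem_univ j) (by rw [← hxj, zero_pow hjs])
          rw [hz]
          simp [← hxj]
        · apply mul_le_mul_of_nonneg_left
          · nlinarith [prod_nonneg' hx c]
          · have hcard : 1 ≤ (supp c).card := Finset.Nonempty.card_pos h
            have : (1 : ℤ) ≤ ((supp c).card : ℤ) := by exact_mod_cast hcard
            omega
    _ = ∑ c ∈ Finset.image φ A, t c := (Finset.sum_image hinj).symm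
    _ ≤ ∑ c ∈ Finset.Nat.antidiagonalTuple k (n + 1), t c :=
        Finset.sum_le_sum_of_subset_of_nonneg himage hnonneg

end WronskiAux

theorem stmt0 (k : ℕ) (x : Fin k → ℤ) (hx : ∀ i, 0 ≤ x i) (δ : ℕ) (hδ : 2 ≤ δ) :
    W k 1 x * W k (δ - 1) x - W k δ x ≥ W k 1 x * W k (δ - 2) x - W k (δ - 1) x := by
  obtain ⟨d, rfl⟩ : ∃ d, δ = d + 2 := ⟨δ - 2, by omega⟩
  rw [show d + 2 - 1 = d + 1 from by omega, show d + 2 - 2 = d from by omega]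
  have expand : ∀ m : ℕ, W k 1 x * W k m x - W k (m + 1) x
      = ∑ c ∈ Finset.Nat.antidiagonalTuple k (m + 1),
          (((WronskiAux.supp c).card : ℤ) - 1) * ∏ i, x i ^ c i := by
    intro m
    rw [WronskiAux.W_one_mul, WronskiAux.W_eq, ← Finset.sum_sub_distrib]
    exact Finset.sum_congr rfl fun c _ => by ring
  rw [ge_iff_le, show (d + 2 : ℕ) = (d + 1) + 1 from rfl, expand (d + 1), expand d]
  exact WronskiAux.key_ineq x hx (d + 1) (by omega)
end

section
/- For nonnegative integers x_1,...,x_k (not all reduced to trivial cases; the inequality holds as stated for all nonnegative integers) and any integer j ≥ 1, the complete homogeneous symmetric polynomials satisfy the log-concavity inequality (W_j^{(k)}(x_1,...,x_k))^2 ≥ W_{j-1}^{(k)}(x_1,...,x_k) · W_{j+1}^{(k)}(x_1,...,x_k). -/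
open Finset

theorem Finset.Nat.sum_antidiagonalTuple_succ {M : Type*} [AddCommMonoid M] (k n : ℕ)
    (f : (Fin (k + 1) → ℕ) → M) :
    ∑ c ∈ Nat.antidiagonalTuple (k + 1) n, f c
      = ∑ ij ∈ antidiagonal n, ∑ c ∈ Nat.antidiagonalTuple k ij.2, f (Fin.cons ij.1 c) := by
  have h : (antidiagonal n).val = (List.Nat.antidiagonal n : Multiset (ℕ × ℕ)) := rfl
  simp only [Finset.sum, h, Nat.antidiagonalTuple, Multiset.Nat.antidiagonalTuple,
    List.Nat.antidiagonalTuple, List.flatMap, Multiset.map_coe, Multiset.sum_coe, List.map_flatten,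
    List.sum_flatten, List.map_map, Function.comp_def]

theorem Finset.filter_piFinset_range_eq_antidiagonalTuple (k δ : ℕ) :
    {c ∈ Fintype.piFinset fun _ : Fin k => range (δ + 1) | ∑ i, c i = δ}
      = Nat.antidiagonalTuple k δ := by
  ext c
  simp only [mem_filter, Fintype.mem_piFinset, mem_range, Nat.mem_antidiagonalTuple,
    and_iff_right_iff_imp]
  rintro rfl i
  exact Nat.lt_succ_of_le (single_le_sum (fun j _ => Nat.zero_le (c j)) (mem_univ i))

def RatioAntitone {R : Type*} [Mul R] [LE R] (a : ℕ → R) : Prop :=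
  ∀ ⦃q p : ℕ⦄, q ≤ p → a q * a (p + 1) ≤ a (q + 1) * a p

theorem RatioAntitone.mul_le_mul_add {R : Type*} [CommMagma R] [Preorder R] {a : ℕ → R}
    (ha : RatioAntitone a) {i j : ℕ} (hij : i ≤ j) (s : ℕ) :
    a i * a (j + s) ≤ a (i + s) * a j := by
  induction s generalizing i with
  | zero => rw [add_zero, add_zero, mul_comm]
  | succ s ih =>
    rcases hij.eq_or_lt with rfl | hlt
    · exact (mul_comm (a i) _).le
    · calc a i * a (j + (s + 1)) ≤ a (i + 1) * a (j + s) := ha (q := i) (p := j + s) (by omega)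
        _ ≤ a (i + 1 + s) * a j := ih hlt
        _ = a (i + (s + 1)) * a j := by rw [add_right_comm, add_assoc]

section GeomConv

variable {R : Type*} [CommSemiring R]

def geomConv (t : R) (a : ℕ → R) (n : ℕ) : R :=
  ∑ i ∈ range (n + 1), t ^ i * a (n - i)

theorem geomConv_succ (t : R) (a : ℕ → R) (n : ℕ) :
    geomConv t a (n + 1) = t * geomConv t a n + a (n + 1) := by
  simp only [geomConv, sum_range_succ' _ (n + 1), Nat.add_sub_add_right, pow_succ', mul_assoc,
    mul_sum, pow_zero, one_mul, Nat.sub_zero]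

variable [PartialOrder R] [IsOrderedRing R]

theorem ratioAntitone_geomConv {a : ℕ → R} (ha : RatioAntitone a) (ha₀ : ∀ n, 0 ≤ a n)
    {t : R} (ht : 0 ≤ t) : RatioAntitone (geomConv t a) := by
  intro q p hqp
  have termwise : ∀ i ≤ q, a (q - i) * a (p + 1) ≤ a (q + 1) * a (p - i) := fun i hi => by
    have h := ha.mul_le_mul_add (i := q - i) (j := p - i) (by omega) (i + 1)
    rwa [show p - i + (i + 1) = p + 1 by omega, show q - i + (i + 1) = q + 1 by omega] at h
  have cross : geomConv t a q * a (p + 1) ≤ a (q + 1) * geomConv t a p :=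
    calc geomConv t a q * a (p + 1)
        = ∑ i ∈ range (q + 1), t ^ i * (a (q - i) * a (p + 1)) := by
          simp only [geomConv, sum_mul, mul_assoc]
      _ ≤ ∑ i ∈ range (q + 1), t ^ i * (a (q + 1) * a (p - i)) :=
          sum_le_sum fun i hi => mul_le_mul_of_nonneg_left
            (termwise i (Nat.lt_succ_iff.1 (mem_range.1 hi))) (pow_nonneg ht i)
      _ ≤ ∑ i ∈ range (p + 1), t ^ i * (a (q + 1) * a (p - i)) :=
          sum_le_sum_of_subset_of_nonneg (range_subset_range.2 (by omega)) fun i _ _ =>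
            mul_nonneg (pow_nonneg ht i) (mul_nonneg (ha₀ _) (ha₀ _))
      _ = a (q + 1) * geomConv t a p := by
          simp only [geomConv, mul_sum, mul_left_comm]
  calc geomConv t a q * geomConv t a (p + 1)
      = t * (geomConv t a q * geomConv t a p) + geomConv t a q * a (p + 1) := by
        rw [geomConv_succ]; ring
    _ ≤ t * (geomConv t a q * geomConv t a p) + a (q + 1) * geomConv t a p := by gcongr
    _ = geomConv t a (q + 1) * geomConv t a p := by rw [geomConv_succ]; ring

end GeomConv

section W

variable {R : Type*} [CommSemiring R]

theorem W_eq_sum_antidiagonalTuple (k δ : ℕ) (x : Fin k → R) :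
    W k δ x = ∑ c ∈ Nat.antidiagonalTuple k δ, ∏ i, x i ^ c i := by
  rw [W, filter_piFinset_range_eq_antidiagonalTuple]

theorem W_zero_succ (n : ℕ) (x : Fin 0 → R) : W 0 (n + 1) x = 0 := by
  simp [W_eq_sum_antidiagonalTuple]

theorem W_succ (k n : ℕ) (x : Fin (k + 1) → R) :
    W (k + 1) n x = geomConv (x 0) (fun m => W k m (Fin.tail x)) n := by
  simp only [W_eq_sum_antidiagonalTuple, Nat.sum_antidiagonalTuple_succ, Fin.prod_univ_succ,
    Fin.cons_zero, Fin.cons_succ, ← mul_sum, geomConv, Nat.sum_antidiagonal_eq_sum_range_succ_mk]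
  rfl

variable [PartialOrder R] [IsOrderedRing R]

theorem W_nonneg {k : ℕ} {x : Fin k → R} (hx : ∀ i, 0 ≤ x i) (δ : ℕ) : 0 ≤ W k δ x :=
  sum_nonneg fun _ _ => prod_nonneg fun i _ => pow_nonneg (hx i) _

theorem ratioAntitone_W {k : ℕ} {x : Fin k → R} (hx : ∀ i, 0 ≤ x i) :
    RatioAntitone fun n => W k n x := by
  induction k with
  | zero =>
    intro q p _
    simp [W_zero_succ]
  | succ k ih =>
    have hx' : ∀ i, 0 ≤ Fin.tail x i := fun i => hx i.succ
    rw [funext (W_succ k · x)]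
    exact ratioAntitone_geomConv (ih hx') (W_nonneg hx') (hx 0)

end W

theorem stmt1 (k : ℕ) (x : Fin k → ℤ) (hx : ∀ i, 0 ≤ x i) (j : ℕ) (hj : 1 ≤ j) :
    (W k j x) ^ 2 ≥ W k (j - 1) x * W k (j + 1) x := by
  obtain ⟨q, rfl⟩ : ∃ q, j = q + 1 := ⟨j - 1, by omega⟩
  rw [Nat.add_sub_cancel, ge_iff_le, sq]
  exact ratioAntitone_W hx q.le_succ
end

section
/- Let x_1,...,x_k be nonnegative integers with W_j^{(k)}(x_1,...,x_k) > 0 for all relevant j. Then for any N ≥ 1, the minimum over 1 ≤ j ≤ N of the ratios W_j^{(k)}/W_{j-1}^{(k)} equals W_N^{(k)}/W_{N-1}^{(k)}; equivalently, the sequence of ratios W_j/W_{j-1} is nonincreasing in j. -/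
open Finset

/-- Auxiliary: the complete homogeneous symmetric function as a sum over `finAntidiagonal`. -/
noncomputable def Haux (k : ℕ) (x : Fin k → ℤ) (n : ℕ) : ℤ :=
  ∑ c ∈ finAntidiagonal k n, ∏ i, x i ^ c i

lemma Haux_zero (x : Fin 0 → ℤ) (n : ℕ) : Haux 0 x n = if n = 0 then 1 else 0 := by
  unfold Haux
  split
  · subst ‹n = 0›
    rw [show finAntidiagonal 0 0 = {(0 : Fin 0 → ℕ)} from ?_]
    · simp
    · ext f; simp [Subsingleton.elim f 0]
  · rw [show finAntidiagonal 0 n = ∅ from ?_, Finset.sum_empty]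
    ext f
    simp only [Finset.mem_finAntidiagonal, Finset.notMem_empty, iff_false]
    simp
    omega

lemma Haux_succ (k : ℕ) (x : Fin (k+1) → ℤ) (n : ℕ) :
    Haux (k+1) x n = ∑ i ∈ range (n+1), x 0 ^ i * Haux k (Fin.tail x) (n - i) := by
  unfold Haux
  simp_rw [Finset.mul_sum]
  rw [Finset.sum_sigma']
  refine Finset.sum_nbij' (fun c => ⟨c 0, Fin.tail c⟩) (fun p => Fin.cons p.1 p.2) ?_ ?_ ?_ ?_ ?_
  · intro c hc
    simp only [Finset.mem_finAntidiagonal] at hc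
    rw [Fin.sum_univ_succ] at hc
    simp only [Finset.mem_sigma, Finset.mem_range, Finset.mem_finAntidiagonal]
    constructor
    · omega
    · simp only [Fin.tail]; omega
  · intro p hp
    simp only [Finset.mem_sigma, Finset.mem_range, Finset.mem_finAntidiagonal] at hp
    simp only [Finset.mem_finAntidiagonal, Fin.sum_univ_succ, Fin.cons_zero, Fin.cons_succ]
    omega
  · intro c hc
    exact Fin.cons_self_tail c
  · intro p hp
    simp [Fin.tail_cons]
  · intro c hc
    rw [Fin.prod_univ_succ]
    rfl

lemma Haux_nonneg (k : ℕ) (x : Fin k → ℤ) (hx : ∀ i, 0 ≤ x i) (n : ℕ) : 0 ≤ Haux k x n := by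
  apply Finset.sum_nonneg
  intro c _
  apply Finset.prod_nonneg
  intro i _
  exact pow_nonneg (hx i) _

/-- Ratio-monotone / log-concavity condition. -/
def LC (G : ℕ → ℤ) : Prop := ∀ d e, d ≤ e → G d * G (e+1) ≤ G (d+1) * G e

lemma LC.gen {G : ℕ → ℤ} (hL : LC G) :
    ∀ t p q, p ≤ q → G p * G (q+t) ≤ G (p+t) * G q := by
  intro t
  induction t with
  | zero => intro p q _; simp [mul_comm]
  | succ t ih =>
    intro p q hpq
    rcases eq_or_lt_of_le hpq with rfl | h
    · rw [mul_comm]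
    · calc G p * G (q+(t+1)) = G p * G ((q+t)+1) := rfl
        _ ≤ G (p+1) * G (q+t) := hL p (q+t) (by omega)
        _ ≤ G ((p+1)+t) * G q := ih (p+1) q (by omega)
        _ = G (p+(t+1)) * G q := by rw [show (p+1)+t = p+(t+1) by omega]

/-- discrete convolution with a geometric sequence -/
noncomputable def convS (a : ℤ) (G : ℕ → ℤ) (n : ℕ) : ℤ :=
  ∑ i ∈ range (n+1), a ^ i * G (n - i)

lemma convS_succ (a : ℤ) (G : ℕ → ℤ) (n : ℕ) :
    convS a G (n+1) = G (n+1) + a * convS a G n := by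
  unfold convS
  rw [Finset.sum_range_succ']
  simp only [pow_succ, pow_zero, one_mul, Nat.succ_sub_succ, Nat.sub_zero]
  rw [Finset.mul_sum]
  rw [add_comm]
  congr 1
  apply Finset.sum_congr rfl
  intro i _
  ring

lemma convS_nonneg {a : ℤ} {G : ℕ → ℤ} (ha : 0 ≤ a) (hG : ∀ n, 0 ≤ G n) (n : ℕ) :
    0 ≤ convS a G n := by
  apply Finset.sum_nonneg
  intro i _
  exact mul_nonneg (pow_nonneg ha _) (hG _)

lemma convS_cross {a : ℤ} {G : ℕ → ℤ} (ha : 0 ≤ a) (hG : ∀ n, 0 ≤ G n) (hL : LC G) :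
    ∀ d e, d ≤ e → convS a G d * G (e+1) ≤ G (d+1) * convS a G e := by
  intro d e hde
  unfold convS
  rw [Finset.sum_mul, Finset.mul_sum]
  calc ∑ i ∈ range (d+1), a ^ i * G (d - i) * G (e+1)
      ≤ ∑ i ∈ range (d+1), G (d+1) * (a ^ i * G (e - i)) := by
        apply Finset.sum_le_sum
        intro i hi
        rw [Finset.mem_range] at hi
        have key : G (d-i) * G ((e-i)+(i+1)) ≤ G ((d-i)+(i+1)) * G (e-i) :=
          hL.gen (i+1) (d-i) (e-i) (by omega)
        rw [show (e-i)+(i+1) = e+1 by omega, show (d-i)+(i+1) = d+1 by omega] at key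
        calc a ^ i * G (d - i) * G (e+1) = a ^ i * (G (d-i) * G (e+1)) := by ring
          _ ≤ a ^ i * (G (d+1) * G (e-i)) := by
              exact mul_le_mul_of_nonneg_left key (pow_nonneg ha i)
          _ = G (d+1) * (a ^ i * G (e - i)) := by ring
    _ ≤ ∑ i ∈ range (e+1), G (d+1) * (a ^ i * G (e - i)) := by
        apply Finset.sum_le_sum_of_subset_of_nonneg
        · exact Finset.range_subset_range.2 (by omega)
        · intro i _ _
          exact mul_nonneg (hG _) (mul_nonneg (pow_nonneg ha _) (hG _))

lemma convS_LC {a : ℤ} {G : ℕ → ℤ} (ha : 0 ≤ a) (hG : ∀ n, 0 ≤ G n) (hL : LC G) :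
    LC (convS a G) := by
  intro d e hde
  have hc := convS_cross ha hG hL d e hde
  rw [convS_succ, convS_succ]
  nlinarith [convS_nonneg ha hG d, convS_nonneg ha hG e]

lemma Haux_LC : ∀ (k : ℕ) (x : Fin k → ℤ), (∀ i, 0 ≤ x i) → LC (Haux k x) := by
  intro k
  induction k with
  | zero =>
    intro x hx d e hde
    rw [Haux_zero, Haux_zero, Haux_zero, Haux_zero]
    have h1 : ¬ (e+1 = 0) := by omega
    simp only [h1, if_false, mul_zero]
    have := Haux_nonneg 0 x hx
    split <;> split <;> simp
  | succ k ih =>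
    intro x hx d e hde
    have hrw : ∀ n, Haux (k+1) x n = convS (x 0) (Haux k (Fin.tail x)) n := fun n =>
      Haux_succ k x n
    simp only [hrw]
    exact convS_LC (hx 0) (Haux_nonneg k (Fin.tail x) (fun i => hx i.succ))
      (ih (Fin.tail x) (fun i => hx i.succ)) d e hde

lemma W_eq_Haux (k δ : ℕ) (x : Fin k → ℤ) : W k δ x = Haux k x δ := by
  unfold W Haux
  congr 1
  ext c
  simp only [Finset.mem_filter, Fintype.mem_piFinset, Finset.mem_range,
    Finset.mem_finAntidiagonal]
  constructor
  · rintro ⟨-, h⟩; exact h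
  · intro h
    refine ⟨fun i => ?_, h⟩
    have := Finset.single_le_sum (f := c) (fun i _ => Nat.zero_le _) (Finset.mem_univ i)
    omega

theorem stmt2 (k N : ℕ) (hN : 1 ≤ N) (x : Fin k → ℤ) (hx : ∀ i, 0 ≤ x i)
    (hpos : ∀ j ≤ N, 0 < W k j x) :
    ∀ j, 1 ≤ j → j ≤ N →
      ((W k N x : ℤ) : ℚ) / ((W k (N - 1) x : ℤ) : ℚ) ≤ ((W k j x : ℤ) : ℚ) / ((W k (j - 1) x : ℤ) : ℚ) := by
  intro j hj1 hjN
  have hL := Haux_LC k x hx (j-1) (N-1) (by omega)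
  rw [show j-1+1 = j by omega, show N-1+1 = N by omega] at hL
  rw [← W_eq_Haux, ← W_eq_Haux, ← W_eq_Haux, ← W_eq_Haux] at hL
  have hd1 : (0 : ℚ) < ((W k (N-1) x : ℤ) : ℚ) := by
    exact_mod_cast hpos (N-1) (by omega)
  have hd2 : (0 : ℚ) < ((W k (j-1) x : ℤ) : ℚ) := by
    exact_mod_cast hpos (j-1) (by omega)
  rw [div_le_div_iff₀ hd1 hd2]
  have : (W k (j-1) x : ℤ) * W k N x ≤ W k j x * W k (N-1) x := hL
  have h2 : ((W k (j-1) x : ℤ) * W k N x : ℚ) ≤ ((W k j x : ℤ) * W k (N-1) x : ℚ) := by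
    exact_mod_cast this
  push_cast at h2 ⊢
  linarith [h2]
end

section
/- (Todd's lemma) For integers d_1,...,d_k and p ≥ 0, W_p^{(k)}(d_1−1,...,d_k−1) = Σ_{i=0}^{p} (−1)^{p−i} binom(k+p−1, p−i) W_i^{(k)}(d_1,...,d_k). -/
/-!
Expanding every `(d_i - 1)^{m_i}` binomially and exchanging the sums, the coefficient of `d^n`
in `W_p(d - 1)` is `(-1)^{p - |n|} ∑_{|m| = p} ∏_i C(m_i, n_i)`. This inner sum is the coefficient
of `t^p` in `∏_i t^{n_i} (1 - t)^{-(n_i + 1)} = t^{|n|} (1 - t)^{-(|n| + k)}`, namely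
`C(k + p - 1, p - |n|)`. It depends on `n` only through `|n|`, so regrouping the monomials `d^n`
by total degree produces the `W_i(d)`.
-/

open Finset PowerSeries

lemma neg_one_pow_add_of_le {R : Type*} [Monoid R] [HasDistribNeg R] {j p : ℕ} (h : j ≤ p) :
    (-1 : R) ^ (j + p) = (-1) ^ (p - j) := by
  obtain ⟨r, rfl⟩ := Nat.exists_eq_add_of_le h
  rw [Nat.add_sub_cancel_left, ← add_assoc, pow_add, ← two_mul, pow_mul, neg_one_sq, one_pow,
    one_mul]

lemma sub_pow_eq_sum_range_of_le {R : Type*} [CommRing R] (x y : R) {m N : ℕ} (h : m ≤ N) :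
    (x - y) ^ m = ∑ j ∈ range (N + 1), (-1) ^ (j + m) * x ^ j * y ^ (m - j) * m.choose j := by
  rw [sub_pow]
  refine sum_subset (range_subset_range.2 (by omega)) fun j _ hj => ?_
  rw [Nat.choose_eq_zero_of_lt (by simpa using hj), Nat.cast_zero, mul_zero]

lemma filter_piFinset_range_sum_eq {ι : Type*} [Fintype ι] [DecidableEq ι] {δ N : ℕ}
    (h : δ ≤ N) :
    {c ∈ Fintype.piFinset fun _ : ι => range (N + 1) | ∑ i, c i = δ} = piAntidiag univ δ := by
  ext c
  simp only [mem_filter, Fintype.mem_piFinset, mem_range, mem_piAntidiag, mem_univ,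
    implies_true, and_true, and_iff_right_iff_imp]
  rintro rfl i
  exact Nat.lt_succ_of_le ((single_le_sum (fun j _ => Nat.zero_le (c j)) (mem_univ i)).trans h)

lemma sum_finsuppAntidiag_eq_sum_piAntidiag {ι μ M : Type*} [DecidableEq ι]
    [AddCommMonoid μ] [HasAntidiagonal μ] [DecidableEq μ] [AddCommMonoid M]
    (s : Finset ι) (n : μ) (f : (ι → μ) → M) :
    ∑ l ∈ finsuppAntidiag s n, f l = ∑ g ∈ piAntidiag s n, f g := by
  rw [finsuppAntidiag, sum_map]
  exact sum_attach (piAntidiag s n) f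

namespace PowerSeries

lemma coeff_prod_eq_sum_piAntidiag {R ι : Type*} [CommSemiring R] [DecidableEq ι]
    (f : ι → R⟦X⟧) (d : ℕ) (s : Finset ι) :
    coeff d (∏ j ∈ s, f j) = ∑ l ∈ piAntidiag s d, ∏ i ∈ s, coeff (l i) (f i) := by
  rw [coeff_prod, sum_finsuppAntidiag_eq_sum_piAntidiag s d fun l => ∏ i ∈ s, coeff (l i) (f i)]

variable {R : Type*} [CommRing R]

-- For `d = 0`, truncated subtraction turns the right side into `(n - 1).choose n`, which is
-- `1` for `n = 0` and `0` otherwise.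
lemma coeff_invOneSubPow (d n : ℕ) :
    coeff n (invOneSubPow R d).val = (d + n - 1).choose n := by
  rcases d with _ | d
  · rcases n with _ | n <;> simp [invOneSubPow_zero, coeff_one]
  · rw [invOneSubPow_val_succ_eq_mk_add_choose, coeff_mk, Nat.add_right_comm,
      Nat.add_sub_cancel, Nat.choose_symm_add]

lemma coeff_X_pow_mul_invOneSubPow (n d m : ℕ) :
    coeff m (X ^ n * (invOneSubPow R d).val) =
      if n ≤ m then ((d + (m - n) - 1).choose (m - n) : R) else 0 := by
  rw [coeff_X_pow_mul', coeff_invOneSubPow]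

lemma coeff_X_pow_mul_invOneSubPow_succ (n m : ℕ) :
    coeff m (X ^ n * (invOneSubPow R (n + 1)).val) = (m.choose n : R) := by
  rw [coeff_X_pow_mul_invOneSubPow]
  split_ifs with h
  · rw [Nat.add_right_comm, Nat.add_sub_cancel, ← Nat.choose_symm_add, Nat.add_sub_cancel' h]
  · rw [Nat.choose_eq_zero_of_lt (not_le.1 h), Nat.cast_zero]

lemma prod_invOneSubPow {ι : Type*} (s : Finset ι) (d : ι → ℕ) :
    ∏ i ∈ s, invOneSubPow R (d i) = invOneSubPow R (∑ i ∈ s, d i) := by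
  simp only [invOneSubPow_eq_inv_one_sub_pow, prod_pow_eq_pow_sum]

end PowerSeries

theorem sum_piAntidiag_prod_choose {ι : Type*} [DecidableEq ι] (s : Finset ι) (n : ι → ℕ)
    (p : ℕ) :
    ∑ m ∈ piAntidiag s p, ∏ i ∈ s, (m i).choose (n i) =
      if ∑ i ∈ s, n i ≤ p then (#s + p - 1).choose (p - ∑ i ∈ s, n i) else 0 := by
  have hcoeff : (∑ m ∈ piAntidiag s p, ∏ i ∈ s, ((m i).choose (n i) : ℤ)) =
      coeff p (X ^ (∑ i ∈ s, n i) * (invOneSubPow ℤ (∑ i ∈ s, n i + #s)).val) := by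
    have hprod : ∏ i ∈ s, X ^ n i * (invOneSubPow ℤ (n i + 1)).val =
        X ^ (∑ i ∈ s, n i) * (invOneSubPow ℤ (∑ i ∈ s, n i + #s)).val := by
      rw [prod_mul_distrib, prod_pow_eq_pow_sum, ← Units.coe_prod, prod_invOneSubPow,
        sum_add_distrib, card_eq_sum_ones]
    simp only [← hprod, coeff_prod_eq_sum_piAntidiag, coeff_X_pow_mul_invOneSubPow_succ]
  rw [coeff_X_pow_mul_invOneSubPow] at hcoeff
  split_ifs at hcoeff ⊢ with h
  · rw [show ∑ i ∈ s, n i + #s + (p - ∑ i ∈ s, n i) - 1 = #s + p - 1 by omega] at hcoeff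
    exact_mod_cast hcoeff
  · exact_mod_cast hcoeff

lemma W_eq_sum_piAntidiag {R : Type*} [CommSemiring R] (k δ : ℕ) (x : Fin k → R) :
    W k δ x = ∑ c ∈ piAntidiag univ δ, ∏ i, x i ^ c i := by
  rw [W, filter_piFinset_range_sum_eq le_rfl]

lemma W_sub_one_eq_sum {R : Type*} [CommRing R] (k p : ℕ) (x : Fin k → R) :
    W k p (fun i => x i - 1) =
      ∑ n ∈ Fintype.piFinset fun _ => range (p + 1),
        (-1) ^ (∑ i, n i + p) * ((∑ m ∈ piAntidiag univ p, ∏ i, (m i).choose (n i) : ℕ) : R) *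
          ∏ i, x i ^ n i := by
  rw [W_eq_sum_piAntidiag]
  calc ∑ m ∈ piAntidiag univ p, ∏ i, (x i - 1) ^ m i
      = ∑ m ∈ piAntidiag univ p, ∑ n ∈ Fintype.piFinset fun _ => range (p + 1),
          ∏ i, (-1) ^ (n i + m i) * x i ^ n i * ((m i).choose (n i) : R) := by
        refine sum_congr rfl fun m hm => ?_
        have hmp : ∀ i, m i ≤ p := fun i =>
          (mem_piAntidiag.1 hm).1 ▸ single_le_sum (fun j _ => Nat.zero_le (m j)) (mem_univ i)
        simp only [sub_pow_eq_sum_range_of_le _ _ (hmp _), one_pow, mul_one, prod_univ_sum]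
    _ = ∑ n ∈ Fintype.piFinset fun _ => range (p + 1), ∑ m ∈ piAntidiag univ p,
          ∏ i, (-1) ^ (n i + m i) * x i ^ n i * ((m i).choose (n i) : R) := sum_comm
    _ = _ := by
        refine sum_congr rfl fun n _ => ?_
        rw [Nat.cast_sum, mul_sum, sum_mul]
        refine sum_congr rfl fun m hm => ?_
        rw [prod_mul_distrib, prod_mul_distrib, prod_pow_eq_pow_sum, sum_add_distrib,
          (mem_piAntidiag.1 hm).1, Nat.cast_prod]
        ring

lemma sum_piFinset_range_eq_sum_W {R : Type*} [CommSemiring R] (k p : ℕ) (c : ℕ → R)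
    (x : Fin k → R) :
    ∑ n ∈ Fintype.piFinset fun _ => range (p + 1),
        (if ∑ i, n i ≤ p then c (∑ i, n i) else 0) * ∏ i, x i ^ n i =
      ∑ j ∈ range (p + 1), c j * W k j x := by
  calc _ = ∑ n ∈ Fintype.piFinset fun _ => range (p + 1) with ∑ i, n i ∈ range (p + 1),
        c (∑ i, n i) * ∏ i, x i ^ n i := by
        simp only [ite_zero_mul, ← sum_filter, mem_range, Nat.lt_succ_iff]
    _ = ∑ j ∈ range (p + 1), ∑ n ∈ Fintype.piFinset fun _ => range (p + 1) with ∑ i, n i = j,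
          c j * ∏ i, x i ^ n i := by
        rw [← sum_fiberwise_eq_sum_filter]
        exact sum_congr rfl fun j _ => sum_congr rfl fun n hn => by rw [(mem_filter.1 hn).2]
    _ = _ := by
        refine sum_congr rfl fun j hj => ?_
        rw [← mul_sum, W_eq_sum_piAntidiag,
          filter_piFinset_range_sum_eq (Nat.lt_succ_iff.1 (mem_range.1 hj))]

/-- Todd's lemma. -/
theorem stmt5 {R : Type*} [CommRing R] (k : ℕ) (d : Fin k → R) (p : ℕ) :
    W k p (fun i => d i - 1) =
      ∑ i ∈ Finset.range (p + 1),
        (-1) ^ (p - i) * ((k + p - 1).choose (p - i) : R) * W k i d := by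
  rw [W_sub_one_eq_sum, ← sum_piFinset_range_eq_sum_W]
  refine sum_congr rfl fun n _ => ?_
  rw [sum_piAntidiag_prod_choose, card_univ, Fintype.card_fin]
  split_ifs with h
  · rw [neg_one_pow_add_of_le h]
  · simp
end

section
/- For variables x_1,...,x_k and indices j ≥ 1, the identity (W_j^{(k)})^2 − W_{j-1}^{(k)}·W_{j+1}^{(k)} = (W_j^{(k-1)})^2 + W_{j-1}^{(k)}·(W_j^{(k-1)}·x_k − W_{j+1}^{(k-1)}) holds as polynomials, where W^{(k-1)} is evaluated at (x_1,...,x_{k-1}) and W^{(k)} at (x_1,...,x_k). -/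
lemma W_eq_S {R : Type*} [CommSemiring R] (k δ N : ℕ) (h : δ < N) (x : Fin k → R) :
    W k δ x = ∑ c ∈ Finset.filter (fun c => ∑ i, c i = δ)
      (Fintype.piFinset fun _ : Fin k => Finset.range N), ∏ i, x i ^ c i := by
  unfold W
  apply Finset.sum_congr _ (fun _ _ => rfl)
  ext c
  simp only [Finset.mem_filter, Fintype.mem_piFinset, Finset.mem_range]
  constructor
  · rintro ⟨hc, hs⟩
    refine ⟨fun i => lt_of_le_of_lt ?_ h, hs⟩
    rw [← hs]
    exact Finset.single_le_sum (fun _ _ => Nat.zero_le _) (Finset.mem_univ i)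
  · rintro ⟨hc, hs⟩
    refine ⟨fun i => Nat.lt_succ_of_le ?_, hs⟩
    rw [← hs]
    exact Finset.single_le_sum (fun _ _ => Nat.zero_le _) (Finset.mem_univ i)

lemma W_succ_s10 {R : Type*} [CommSemiring R] (m δ : ℕ) (x : Fin (m + 1) → R) :
    W (m + 1) (δ + 1) x =
      W m (δ + 1) (fun i => x i.castSucc) + x (Fin.last m) * W (m + 1) δ x := by
  rw [W_eq_S (m + 1) δ (δ + 2) (by omega) x]
  unfold W
  rw [← Finset.sum_filter_add_sum_filter_not
    (Finset.filter (fun c => ∑ i, c i = δ + 1)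
      (Fintype.piFinset fun _ : Fin (m + 1) => Finset.range (δ + 1 + 1)))
    (fun c => c (Fin.last m) = 0)]
  congr 1
  · -- c last = 0 part
    apply Finset.sum_nbij' (i := fun c => fun i : Fin m => c i.castSucc)
      (j := fun c => Fin.snoc c 0)
    · intro c hc
      simp only [Finset.mem_filter, Fintype.mem_piFinset, Finset.mem_range] at hc ⊢
      obtain ⟨⟨h1, h2⟩, h3⟩ := hc
      refine ⟨fun i => h1 _, ?_⟩
      rw [← h2, Fin.sum_univ_castSucc, h3, add_zero]
    · intro c hc
      simp only [Finset.mem_filter, Fintype.mem_piFinset, Finset.mem_range] at hc ⊢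
      obtain ⟨h1, h2⟩ := hc
      refine ⟨⟨fun i => ?_, ?_⟩, by simp⟩
      · induction i using Fin.lastCases with
        | last => simp
        | cast i => simpa using h1 i
      · rw [Fin.sum_univ_castSucc]
        simpa using h2
    · intro c hc
      simp only [Finset.mem_filter] at hc
      funext i
      induction i using Fin.lastCases with
      | last => simp [hc.2]
      | cast i => simp
    · intro c hc
      funext i
      simp
    · intro c hc
      simp only [Finset.mem_filter] at hc
      rw [Fin.prod_univ_castSucc, hc.2, pow_zero, mul_one]
  · -- c last ≠ 0 part
    rw [Finset.mul_sum]
    apply Finset.sum_nbij' (i := fun c => Function.update c (Fin.last m) (c (Fin.last m) - 1))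
      (j := fun c => Function.update c (Fin.last m) (c (Fin.last m) + 1))
    · intro c hc
      simp only [Finset.mem_filter, Fintype.mem_piFinset, Finset.mem_range] at hc ⊢
      obtain ⟨⟨h1, h2⟩, h3⟩ := hc
      constructor
      · intro i
        rcases eq_or_ne i (Fin.last m) with rfl | hne
        · simp; have := h1 (Fin.last m); omega
        · simp [Function.update_of_ne hne]; exact h1 i
      · rw [Fin.sum_univ_castSucc] at h2 ⊢
        have : ∀ i : Fin m, Function.update c (Fin.last m) (c (Fin.last m) - 1) i.castSucc
            = c i.castSucc := fun i =>
          Function.update_of_ne (by simp [Fin.ext_iff]; omega) _ _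
        simp only [this, Function.update_self]
        omega
    · intro c hc
      simp only [Finset.mem_filter, Fintype.mem_piFinset, Finset.mem_range] at hc ⊢
      obtain ⟨h1, h2⟩ := hc
      have hle : c (Fin.last m) ≤ δ := by
        rw [← h2]
        exact Finset.single_le_sum (fun _ _ => Nat.zero_le _) (Finset.mem_univ _)
      refine ⟨⟨?_, ?_⟩, by simp⟩
      · intro i
        rcases eq_or_ne i (Fin.last m) with rfl | hne
        · simp; omega
        · simp [Function.update_of_ne hne]; have := h1 i; omega
      · rw [Fin.sum_univ_castSucc] at h2 ⊢
        have : ∀ i : Fin m, Function.update c (Fin.last m) (c (Fin.last m) + 1) i.castSucc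
            = c i.castSucc := fun i =>
          Function.update_of_ne (by simp [Fin.ext_iff]; omega) _ _
        simp only [this, Function.update_self]
        omega
    · intro c hc
      simp only [Finset.mem_filter] at hc
      funext i
      rcases eq_or_ne i (Fin.last m) with rfl | hne
      · simp; omega
      · simp [Function.update_of_ne hne]
    · intro c hc
      funext i
      rcases eq_or_ne i (Fin.last m) with rfl | hne
      · simp
      · simp [Function.update_of_ne hne]
    · intro c hc
      simp only [Finset.mem_filter] at hc
      obtain ⟨_, h3⟩ := hc
      rw [Fin.prod_univ_castSucc, Fin.prod_univ_castSucc]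
      have hcast : ∀ i : Fin m, Function.update c (Fin.last m) (c (Fin.last m) - 1) i.castSucc
          = c i.castSucc := fun i =>
        Function.update_of_ne (by simp [Fin.ext_iff]; omega) _ _
      obtain ⟨t, ht⟩ : ∃ t, c (Fin.last m) = t + 1 := ⟨c (Fin.last m) - 1, by omega⟩
      have hcast' : ∀ i : Fin m, Function.update c (Fin.last m) t i.castSucc = c i.castSucc :=
        fun i => Function.update_of_ne (by simp [Fin.ext_iff]; omega) _ _
      simp only [ht, Nat.add_sub_cancel, hcast', Function.update_self, pow_succ]
      ring

theorem stmt10 {R : Type*} [CommRing R] (m : ℕ) (x : Fin (m + 1) → R) (j : ℕ) (hj : 1 ≤ j) :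
    (W (m + 1) j x) ^ 2 - W (m + 1) (j - 1) x * W (m + 1) (j + 1) x =
      (W m j (fun i => x i.castSucc)) ^ 2 +
        W (m + 1) (j - 1) x *
          (W m j (fun i => x i.castSucc) * x (Fin.last m) -
            W m (j + 1) (fun i => x i.castSucc)) := by
  obtain ⟨n, rfl⟩ : ∃ n, j = n + 1 := ⟨j - 1, by omega⟩
  have h1 := W_succ_s10 m n x
  have h2 := W_succ_s10 m (n + 1) x
  simp only [Nat.add_sub_cancel]
  rw [h2, h1]
  ring
end

section
/- Let k ≥ 1, n > k with n − k odd, and let d_1,...,d_k ≥ 2 be integers, with W_j = W_j^{(k)}(d_1−1,...,d_k−1). Define the polynomial P(d) = Σ_{j=0}^{n−k} [Σ_{δ=0}^{j} (−1)^δ W_δ] d^{n−k−j}. If d is a positive integer with d + 1 − W_1 ≤ 0 and d < (W_δ − W_{δ-1})/(W_{δ-1} − W_{δ-2}) for all 2 ≤ δ ≤ n−k, then P(d) ≤ 0. -/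
lemma W_zero {R : Type*} [CommSemiring R] (k : ℕ) (x : Fin k → R) : W k 0 x = 1 := by
  unfold W
  rw [Finset.sum_eq_single (fun _ => 0)]
  · simp
  · intro c hc hne
    exfalso; apply hne; funext i
    simp only [Finset.mem_filter, Fintype.mem_piFinset, Finset.mem_range] at hc
    have := hc.1 i
    omega
  · intro h; exfalso; apply h
    simp [Fintype.mem_piFinset]

lemma W_map {R S : Type*} [CommSemiring R] [CommSemiring S] (f : R →+* S)
    (k δ : ℕ) (x : Fin k → R) : f (W k δ x) = W k δ (fun i => f (x i)) := by
  simp [W, map_sum, map_prod, map_pow]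

lemma sum_pair {M : Type*} [AddCommMonoid M] (s : ℕ) (f : ℕ → M) :
    ∑ j ∈ Finset.range (2*s+2), f j = ∑ t ∈ Finset.range (s+1), (f (2*t) + f (2*t+1)) := by
  induction s with
  | zero => simp [Finset.sum_range_succ]
  | succ s ih =>
    rw [show 2*(s+1)+2 = (2*s+2)+1+1 from by ring, Finset.sum_range_succ, Finset.sum_range_succ,
      ih, Finset.sum_range_succ (fun t => f (2*t) + f (2*t+1)) (s+1)]
    simp only [show 2*(s+1) = 2*s+2 from by ring, show 2*(s+1)+1 = 2*s+2+1 from by ring, add_assoc]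

theorem stmt11 (k n : ℕ) (hk : 1 ≤ k) (hkn : k < n) (hodd : Odd (n - k))
    (dd : Fin k → ℤ) (hdd : ∀ i, 2 ≤ dd i) (d : ℕ) (hd : 1 ≤ d)
    (hdiff : ∀ δ, 2 ≤ δ → δ ≤ n - k →
      W k (δ - 2) (fun i => dd i - 1) < W k (δ - 1) (fun i => dd i - 1))
    (h1 : (d : ℤ) + 1 - W k 1 (fun i => dd i - 1) ≤ 0)
    (h2 : ∀ δ, 2 ≤ δ → δ ≤ n - k →
      (d : ℚ) < ((W k δ (fun i => dd i - 1) : ℚ) - (W k (δ - 1) (fun i => dd i - 1) : ℚ)) /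
          ((W k (δ - 1) (fun i => dd i - 1) : ℚ) - (W k (δ - 2) (fun i => dd i - 1) : ℚ))) :
    ∑ j ∈ Finset.range (n - k + 1),
        (∑ δ ∈ Finset.range (j + 1), (-1) ^ δ * W k δ (fun i => dd i - 1)) *
          (d : ℤ) ^ (n - k - j) ≤ 0 := by
  set x : Fin k → ℤ := fun i => dd i - 1 with hx
  set m := n - k with hm
  set A : ℕ → ℤ := fun j => ∑ δ ∈ Finset.range (j + 1), (-1) ^ δ * W k δ x with hA
  obtain ⟨s, hs⟩ := hodd
  -- integerized h2
  have hint : ∀ δ, 2 ≤ δ → δ ≤ m →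
      (d : ℤ) * (W k (δ-1) x - W k (δ-2) x) < W k δ x - W k (δ-1) x := by
    intro δ hδ2 hδm
    have hd' := hdiff δ hδ2 hδm
    have h2' := h2 δ hδ2 hδm
    have hc : ∀ ε, ((W k ε x : ℤ) : ℚ) = W k ε (fun i => (dd i : ℚ) - 1) := by
      intro ε
      rw [show ((W k ε x : ℤ) : ℚ) = (Int.castRingHom ℚ) (W k ε x) from rfl, W_map]
      simp [hx]
    rw [← hc, ← hc, ← hc] at h2'
    have hpos : (0:ℚ) < ((W k (δ-1) x : ℤ) : ℚ) - ((W k (δ-2) x : ℤ) : ℚ) := by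
      rw [sub_pos]; exact_mod_cast hd'
    rw [lt_div_iff₀ hpos] at h2'
    exact_mod_cast h2'
  have key : ∀ t, 2*t+1 ≤ m → ((d:ℤ) + 1) * A (2*t) ≤ W k (2*t+1) x := by
    intro t
    induction t with
    | zero =>
      intro _
      have : A 0 = 1 := by simp [hA, W_zero]
      rw [this]
      simpa using h1
    | succ t ih =>
      intro h
      have h' : 2*t+1 ≤ m := by omega
      have ih' := ih h'
      have step : ∀ j, A (j+1) = A j + (-1)^(j+1) * W k (j+1) x := by
        intro j
        simp only [hA]
        exact Finset.sum_range_succ _ _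
      have e1 : A (2*(t+1)) = A (2*t) - W k (2*t+1) x + W k (2*t+2) x := by
        rw [show 2*(t+1) = (2*t+1)+1 from by ring, step, show 2*t+1 = (2*t)+1 from rfl, step]
        have o1 : Odd (2*t+1) := ⟨t, by ring⟩
        have o2 : Even (2*t+1+1) := ⟨t+1, by ring⟩
        rw [show (2*t)+1 = 2*t+1 from rfl, o1.neg_one_pow, o2.neg_one_pow]
        ring
      have hi1 := hint (2*t+2) (by omega) (by omega)
      have hi2 := hint (2*t+3) (by omega) (by omega)
      simp only [show 2*t+2-1 = 2*t+1 from by omega, show 2*t+2-2 = 2*t from by omega,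
        show 2*t+3-1 = 2*t+2 from by omega, show 2*t+3-2 = 2*t+1 from by omega] at hi1 hi2
      have hd0 : (0:ℤ) ≤ (d:ℤ) := Int.natCast_nonneg d
      rw [show 2*(t+1)+1 = 2*t+3 from by ring]
      rw [e1]
      nlinarith [ih', hi1, hi2]
  -- split the sum into pairs
  have hms : m + 1 = 2*s + 2 := by omega
  rw [hms, sum_pair]
  apply Finset.sum_nonpos
  intro t ht
  rw [Finset.mem_range] at ht
  have ht' : 2*t+1 ≤ m := by omega
  have e2 : A (2*t+1) = A (2*t) - W k (2*t+1) x := by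
    have step : A (2*t+1) = A (2*t) + (-1)^(2*t+1) * W k (2*t+1) x := by
      simp only [hA]
      exact Finset.sum_range_succ _ _
    have o1 : Odd (2*t+1) := ⟨t, by ring⟩
    rw [step, o1.neg_one_pow]
    ring
  have epow : (d:ℤ) ^ (m - 2*t) = (d:ℤ) * (d:ℤ) ^ (m - (2*t+1)) := by
    rw [show m - 2*t = (m - (2*t+1)) + 1 from by omega, pow_succ]
    ring
  show A (2*t) * (d:ℤ) ^ (m - 2*t) + A (2*t+1) * (d:ℤ) ^ (m - (2*t+1)) ≤ 0
  rw [e2, epow]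
  have hkey := key t ht'
  have hpow : (0:ℤ) ≤ (d:ℤ) ^ (m - (2*t+1)) := pow_nonneg (Int.natCast_nonneg d) _
  nlinarith [hkey, hpow]
end

section
/- Let d ≥ 2 and N ≥ 1 be integers and x a nonnegative integer (the one-variable case k=1, where W_j^{(1)}(x) = x^j). If n−k = N is odd and P(d) = Σ_{j=0}^{N} [Σ_{δ=0}^{j} (−1)^δ x^δ] d^{N−j} > 0, then d ≥ x. Equivalently, for x ≥ 1, if d < x then P(d) ≤ 0. -/
private def Sgeo (x : ℤ) (n : ℕ) : ℤ := ∑ δ ∈ Finset.range (n + 1), (-1) ^ δ * x ^ δ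

private lemma geom_aux (x : ℤ) (j : ℕ) : (1 + x) * Sgeo x j = 1 - (-x) ^ (j + 1) := by
  induction j with
  | zero => simp [Sgeo]
  | succ n ih =>
    have : Sgeo x (n + 1) = Sgeo x n + (-1) ^ (n + 1) * x ^ (n + 1) := by
      simp [Sgeo, Finset.sum_range_succ]
    rw [this, mul_add, ih]
    have h1 : (-x) ^ (n + 1) = (-1) ^ (n + 1) * x ^ (n + 1) := by
      rw [neg_pow]
    have h2 : (-x) ^ (n + 1 + 1) = (-x) ^ (n + 1) * (-x) := by rw [pow_succ]
    rw [h2, h1]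
    ring

private lemma pair_aux (x d : ℤ) (hd : 2 ≤ d) (hx : d + 1 ≤ x) (i : ℕ) :
    Sgeo x (2 * i) * d + Sgeo x (2 * i + 1) ≤ 0 := by
  have hx1 : (0 : ℤ) < 1 + x := by linarith
  have key : (1 + x) * (Sgeo x (2 * i) * d + Sgeo x (2 * i + 1)) ≤ 0 := by
    have e1 := geom_aux x (2 * i)
    have e2 := geom_aux x (2 * i + 1)
    have o1 : (-x) ^ (2 * i + 1) = -(x ^ (2 * i + 1)) := by
      rw [neg_pow]
      have : (-1 : ℤ) ^ (2 * i + 1) = -1 := Odd.neg_one_pow ⟨i, by ring⟩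
      rw [this]; ring
    have o2 : (-x) ^ (2 * i + 1 + 1) = x ^ (2 * i + 2) := by
      rw [neg_pow]
      have : (-1 : ℤ) ^ (2 * i + 1 + 1) = 1 := Even.neg_one_pow ⟨i + 1, by ring⟩
      rw [this]; norm_num
    rw [o1] at e1
    rw [o2] at e2
    have ht : x ≤ x ^ (2 * i + 1) := le_self_pow₀ (by linarith) (by omega)
    have hmul : (d + 1) * x ^ (2 * i + 1) ≤ x * x ^ (2 * i + 1) :=
      mul_le_mul_of_nonneg_right hx (pow_nonneg (by linarith) _)
    have hps : x ^ (2 * i + 2) = x * x ^ (2 * i + 1) := by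
      rw [← pow_succ']
    calc (1 + x) * (Sgeo x (2 * i) * d + Sgeo x (2 * i + 1))
        = ((1 + x) * Sgeo x (2 * i)) * d + (1 + x) * Sgeo x (2 * i + 1) := by ring
      _ = (1 + x ^ (2 * i + 1)) * d + (1 - x ^ (2 * i + 2)) := by rw [e1, e2]; ring
      _ ≤ 0 := by nlinarith
  nlinarith [key, hx1]

private lemma key_aux (x d : ℤ) (hd : 2 ≤ d) (hx : d + 1 ≤ x) : ∀ m : ℕ,
    ∑ j ∈ Finset.range (2 * m + 1 + 1), Sgeo x j * d ^ (2 * m + 1 - j) ≤ 0 := by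
  intro m
  induction m with
  | zero =>
    have := pair_aux x d hd hx 0
    simp only [Finset.sum_range_succ, Finset.sum_range_zero] at *
    norm_num at *
    linarith
  | succ n ih =>
    have h1 : 2 * (n + 1) + 1 + 1 = (2 * n + 1 + 1) + 1 + 1 := by ring
    rw [h1, Finset.sum_range_succ, Finset.sum_range_succ]
    have h2 : ∑ j ∈ Finset.range (2 * n + 1 + 1), Sgeo x j * d ^ (2 * (n + 1) + 1 - j)
        = d ^ 2 * ∑ j ∈ Finset.range (2 * n + 1 + 1), Sgeo x j * d ^ (2 * n + 1 - j) := by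
      rw [Finset.mul_sum]
      refine Finset.sum_congr rfl fun j hj => ?_
      have hjle : j ≤ 2 * n + 1 := by
        simp only [Finset.mem_range] at hj; omega
      have he : 2 * (n + 1) + 1 - j = (2 * n + 1 - j) + 2 := by omega
      rw [he, pow_add]; ring
    rw [h2]
    have e1 : 2 * (n + 1) + 1 - (2 * n + 1 + 1) = 1 := by omega
    have e2 : 2 * (n + 1) + 1 - (2 * n + 1 + 1 + 1) = 0 := by omega
    rw [e1, e2, pow_one, pow_zero, mul_one]
    have hpair := pair_aux x d hd hx (n + 1)
    have i1 : 2 * (n + 1) = 2 * n + 2 := by ring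
    have i2 : 2 * n + 2 + 1 = 2 * n + 3 := by ring
    rw [i1, i2] at hpair
    have hd2 : d ^ 2 * ∑ j ∈ Finset.range (2 * n + 1 + 1), Sgeo x j * d ^ (2 * n + 1 - j) ≤ 0 :=
      mul_nonpos_of_nonneg_of_nonpos (by positivity) ih
    linarith

theorem stmt13 (x : ℕ) (N : ℕ) (hN : Odd N) (d : ℕ) (hd : 2 ≤ d)
    (hpos : 0 < ∑ j ∈ Finset.range (N + 1),
        (∑ δ ∈ Finset.range (j + 1), (-1) ^ δ * (x : ℤ) ^ δ) * (d : ℤ) ^ (N - j)) :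
    x ≤ d := by
  by_contra h
  push_neg at h
  obtain ⟨m, rfl⟩ := hN
  have hx : (d : ℤ) + 1 ≤ (x : ℤ) := by exact_mod_cast h
  have hd' : (2 : ℤ) ≤ (d : ℤ) := by exact_mod_cast hd
  have hkey := key_aux (x : ℤ) (d : ℤ) hd' hx m
  simp only [Sgeo] at hkey
  linarith
end
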